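/- arXiv:2508.09608 — 2 statements merged into one kernel-verified Lean document; each statement's English description precedes it below -/
import Mathlib

section
/- For every integer n ≥ 0, p(7n + 5) ≡ 0 (mod 7), where p denotes the partition function. -/
/-!
Let `η = ∏ (1 - X ^ n)`, so that `P = ∑ p(n) X ^ n` is `η⁻¹`. Differentiating at `Y = 1` the finite
triple product `∏_{j=1}^{s} (X ^ j - Y) * ∏_{j=0}^{s} (1 - X ^ j Y)`, whose coefficient of `Y ^ i`
is `(-1) ^ i X ^ T(i - s - 1) [2s+1, i]` with `T(d) = d (d + 1) / 2` and Gaussian binomials `[n, i]`,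
gives the finite Jacobi identity
`(X; X)_s ^ 2 = ∑_{k ≤ s} (-1) ^ k (2k + 1) X ^ T(k) [2s+1, s-k]`. As `s → ∞` the Gaussian
binomials tend to `P`, whence Jacobi's identity `η ^ 3 = ∑ (-1) ^ k (2k + 1) X ^ T(k)`.

Over `𝔽₇` write `P = (η ^ 3) ^ 2 * P ^ 7`. By Frobenius `P ^ 7` is a series in `X ^ 7`, and the
coefficient of `X ^ m` in `(η ^ 3) ^ 2` vanishes when `m ≡ 5 mod 7`: if `T(j) + T(k) ≡ 5` then
`(2j + 1) ^ 2 + (2k + 1) ^ 2 = 8 (T(j) + T(k)) + 2 ≡ 0`, and since `-1` is not a square mod `7`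
this forces `2j + 1 ≡ 0`.
-/

open Finset

namespace RamanujanCongruence

noncomputable section

section PolynomialCoeff

open Polynomial

variable {S : Type*} [CommRing S]

theorem coeff_mul_C_sub_X_zero (p : S[X]) (c : S) : (p * (C c - X)).coeff 0 = p.coeff 0 * c := by
  simp [mul_sub]

theorem coeff_mul_C_sub_X_succ (p : S[X]) (c : S) (i : ℕ) :
    (p * (C c - X)).coeff (i + 1) = p.coeff (i + 1) * c - p.coeff i := by
  simp [mul_sub]

theorem coeff_mul_one_sub_C_mul_X_succ (p : S[X]) (c : S) (i : ℕ) :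
    (p * (1 - C c * X)).coeff (i + 1) = p.coeff (i + 1) - c * p.coeff i := by
  rw [mul_sub, mul_one, ← mul_assoc, mul_comm p, mul_assoc]
  simp

end PolynomialCoeff

open PowerSeries

variable {R : Type*} [CommRing R]

section Truncation

theorem smodEq_span_X_pow_iff {n : ℕ} {f g : R⟦X⟧} :
    f ≡ g [SMOD Ideal.span {(X : R⟦X⟧) ^ n}] ↔ ∀ k < n, coeff k f = coeff k g := by
  simp only [SModEq.sub_mem, Ideal.mem_span_singleton, X_pow_dvd_iff, map_sub, sub_eq_zero]

theorem coeff_eq_of_smodEq {n k : ℕ} {f g : R⟦X⟧} (h : f ≡ g [SMOD Ideal.span {(X : R⟦X⟧) ^ n}])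
    (hk : k < n) : coeff k f = coeff k g :=
  smodEq_span_X_pow_iff.1 h k hk

theorem smodEq_span_X_pow_mono {m n : ℕ} {f g : R⟦X⟧} (hmn : m ≤ n)
    (h : f ≡ g [SMOD Ideal.span {(X : R⟦X⟧) ^ n}]) :
    f ≡ g [SMOD Ideal.span {(X : R⟦X⟧) ^ m}] :=
  h.mono (Ideal.span_singleton_le_span_singleton.2 (pow_dvd_pow X hmn))

theorem X_pow_mul_smodEq {m n : ℕ} {f g : R⟦X⟧} (h : f ≡ g [SMOD Ideal.span {(X : R⟦X⟧) ^ n}]) :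
    X ^ m * f ≡ X ^ m * g [SMOD Ideal.span {(X : R⟦X⟧) ^ (m + n)}] := by
  rw [SModEq.sub_mem, Ideal.mem_span_singleton] at h ⊢
  rw [← mul_sub, pow_add]
  exact mul_dvd_mul_left _ h

theorem prod_one_sub_X_pow_smodEq_one {s : Finset ℕ} {e : ℕ → ℕ} {n : ℕ} (h : ∀ i ∈ s, n ≤ e i) :
    ∏ i ∈ s, (1 - X ^ e i : R⟦X⟧) ≡ 1 [SMOD Ideal.span {(X : R⟦X⟧) ^ n}] := by
  have hfac : ∀ i ∈ s, (1 - X ^ e i : R⟦X⟧) ≡ 1 [SMOD Ideal.span {(X : R⟦X⟧) ^ n}] := by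
    intro i hi
    rw [SModEq.sub_mem, Ideal.mem_span_singleton, sub_sub_cancel_left, dvd_neg]
    exact pow_dvd_pow X (h i hi)
  simpa using SModEq.prod hfac

end Truncation

section Euler

variable (R) in
def qPochhammer (n : ℕ) : R⟦X⟧ := ∏ i ∈ range n, (1 - X ^ (i + 1))

theorem qPochhammer_succ (n : ℕ) :
    qPochhammer R (n + 1) = qPochhammer R n * (1 - X ^ (n + 1)) :=
  prod_range_succ _ _

theorem isUnit_qPochhammer (n : ℕ) : IsUnit (qPochhammer R n) := by
  rw [isUnit_iff_constantCoeff, qPochhammer, map_prod]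
  simp

theorem pentagonalSeries_smodEq_qPochhammer (m : ℕ) :
    pentagonalSeries R ≡ qPochhammer R m [SMOD Ideal.span {(X : R⟦X⟧) ^ (m + 1)}] := by
  refine smodEq_span_X_pow_iff.2 fun k hk => ?_
  obtain ⟨s, hs, hms⟩ :=
    ((coeff_prod_one_sub_X_pow_eventually_eq R k).and (Filter.eventually_ge_atTop (range m))).exists
  rw [← hs]
  refine coeff_eq_of_smodEq ?_ hk
  have h := (prod_one_sub_X_pow_smodEq_one (R := R) (s := s \ range m) (e := (· + 1))
    (n := m + 1) fun i hi => by simp only [mem_sdiff, mem_range] at hi; omega).mul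
    (SModEq.refl (qPochhammer R m))
  rwa [one_mul, qPochhammer, prod_sdiff hms] at h

variable (R) in
def partitionSeries : R⟦X⟧ := PowerSeries.mk fun n => (Fintype.card n.Partition : R)

open scoped PowerSeries.WithPiTopology in
theorem partitionSeries_mul_pentagonalSeries : partitionSeries R * pentagonalSeries R = 1 := by
  let _ : TopologicalSpace R := ⊥
  have : DiscreteTopology R := ⟨rfl⟩
  have hgeom (i : ℕ) : (∑' j, (X : R⟦X⟧) ^ ((i + 1) * j)) * (1 - X ^ (i + 1)) = 1 := by
    simp_rw [pow_mul]
    exact WithPiTopology.tsum_pow_mul_one_sub_of_constantCoeff_eq_zero (by simp)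
  have h := (Nat.Partition.hasProd_powerSeriesMk_card_restricted R (fun _ => True)).mul
    (WithPiTopology.hasProd_one_sub_X_pow R)
  simp only [if_true, hgeom] at h
  convert h.unique hasProd_one
  ext n
  simp [partitionSeries, Nat.Partition.restricted]

end Euler

section GaussianBinomial

variable (R) in
def qBinomial : ℕ → ℕ → R⟦X⟧
  | _, 0 => 1
  | 0, _ + 1 => 0
  | n + 1, k + 1 => qBinomial n k + X ^ (k + 1) * qBinomial n (k + 1)

@[simp]
theorem qBinomial_zero_right (n : ℕ) : qBinomial R n 0 = 1 := by
  cases n <;> rfl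

theorem qBinomial_succ_succ (n k : ℕ) :
    qBinomial R (n + 1) (k + 1) = qBinomial R n k + X ^ (k + 1) * qBinomial R n (k + 1) :=
  rfl

theorem qBinomial_eq_zero_of_lt {n k : ℕ} (h : n < k) : qBinomial R n k = 0 := by
  induction n generalizing k with
  | zero => obtain ⟨k, rfl⟩ := Nat.exists_eq_add_one_of_ne_zero h.ne'; rfl
  | succ n ih =>
    obtain ⟨k, rfl⟩ := Nat.exists_eq_add_one_of_ne_zero (by omega : k ≠ 0)
    rw [qBinomial_succ_succ, ih (by omega), ih (by omega), mul_zero, add_zero]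

@[simp]
theorem qBinomial_self (n : ℕ) : qBinomial R n n = 1 := by
  induction n with
  | zero => rfl
  | succ n ih =>
    rw [qBinomial_succ_succ, ih, qBinomial_eq_zero_of_lt (by omega), mul_zero, add_zero]

theorem qBinomial_mul_qPochhammer_mul_qPochhammer (a b : ℕ) :
    qBinomial R (a + b) a * qPochhammer R a * qPochhammer R b = qPochhammer R (a + b) := by
  induction b generalizing a with
  | zero => simp [qPochhammer]
  | succ b ihb =>
    induction a with
    | zero => simp [qPochhammer]
    | succ a iha =>
      have hb := ihb (a + 1)
      rw [show a + 1 + b = a + (b + 1) by omega] at hb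
      rw [qPochhammer_succ] at iha hb
      rw [show a + 1 + (b + 1) = a + (b + 1) + 1 by omega, qBinomial_succ_succ,
        qPochhammer_succ, qPochhammer_succ, qPochhammer_succ]
      linear_combination (1 - X ^ (a + 1)) * iha + X ^ (a + 1) * (1 - X ^ (b + 1)) * hb

theorem qBinomial_add_comm (a b : ℕ) : qBinomial R (a + b) a = qBinomial R (a + b) b := by
  have h := qBinomial_mul_qPochhammer_mul_qPochhammer (R := R) b a
  rw [add_comm b a, ← qBinomial_mul_qPochhammer_mul_qPochhammer (R := R) a b, mul_assoc,
    mul_assoc, mul_comm (qPochhammer R b)] at h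
  exact ((isUnit_qPochhammer a).mul (isUnit_qPochhammer b)).mul_right_cancel h.symm

theorem qBinomial_succ_succ' (n k : ℕ) :
    qBinomial R (n + 1) (k + 1) = qBinomial R n (k + 1) + X ^ (n - k) * qBinomial R n k := by
  rcases lt_or_ge n k with h | h
  · simp [qBinomial_eq_zero_of_lt, h, Nat.lt_succ_of_lt h]
  obtain ⟨b, rfl⟩ := Nat.exists_eq_add_of_le h
  cases b with
  | zero => simp [qBinomial_eq_zero_of_lt]
  | succ c =>
    have e1 := qBinomial_add_comm (R := R) (k + 1) (c + 1)
    have e2 := qBinomial_add_comm (R := R) (k + 1) c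
    have e3 := qBinomial_add_comm (R := R) k (c + 1)
    rw [show k + (c + 1) + 1 = k + 1 + (c + 1) by omega, e1,
      show k + 1 + (c + 1) = k + 1 + c + 1 by omega, qBinomial_succ_succ, ← e2,
      show k + 1 + c = k + (c + 1) by omega, ← e3, show k + (c + 1) - k = c + 1 by omega]

/-- `[a + b, a] = (X; X)_{a+b} / ((X; X)_a (X; X)_b)`, and each `(X; X)_n` agrees with `η` up to
degree `n`. -/
theorem qBinomial_smodEq_partitionSeries {a b N : ℕ} (ha : N ≤ a) (hb : N ≤ b) :
    qBinomial R (a + b) a ≡ partitionSeries R [SMOD Ideal.span {(X : R⟦X⟧) ^ (N + 1)}] := by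
  have hle {m : ℕ} (hm : N ≤ m) :
      qPochhammer R m ≡ pentagonalSeries R [SMOD Ideal.span {(X : R⟦X⟧) ^ (N + 1)}] :=
    smodEq_span_X_pow_mono (by omega) (pentagonalSeries_smodEq_qPochhammer _).symm
  have key := (SModEq.refl (qBinomial R (a + b) a)).mul (hle ha) |>.mul (hle hb)
  rw [qBinomial_mul_qPochhammer_mul_qPochhammer] at key
  have hP := partitionSeries_mul_pentagonalSeries (R := R)
  calc qBinomial R (a + b) a
      = qBinomial R (a + b) a * pentagonalSeries R * pentagonalSeries R *
          (partitionSeries R * partitionSeries R) := by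
        linear_combination (-qBinomial R (a + b) a *
          (partitionSeries R * pentagonalSeries R + 1)) * hP
    _ ≡ qPochhammer R (a + b) * (partitionSeries R * partitionSeries R)
        [SMOD Ideal.span {(X : R⟦X⟧) ^ (N + 1)}] := key.symm.mul SModEq.rfl
    _ ≡ pentagonalSeries R * (partitionSeries R * partitionSeries R)
        [SMOD Ideal.span {(X : R⟦X⟧) ^ (N + 1)}] := (hle (by omega)).mul SModEq.rfl
    _ = partitionSeries R := by linear_combination partitionSeries R * hP

end GaussianBinomial

section TriangularNumbers

/-- Defined on all of `ℤ` so that the exponents of `tripleProduct` have a single formula. -/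
def tri (d : ℤ) : ℕ := (d * (d + 1) / 2).toNat

theorem two_mul_tri (d : ℤ) : 2 * (tri d : ℤ) = d * (d + 1) := by
  have h0 : 0 ≤ d * (d + 1) := by rcases le_or_gt 0 d with h | h <;> nlinarith
  obtain ⟨m, hm⟩ := Int.even_mul_succ_self d
  rw [tri, Int.toNat_of_nonneg (by omega), hm]
  omega

theorem tri_neg_sub_one (d : ℤ) : tri (-d - 1) = tri d := by
  have h : (tri (-d - 1) : ℤ) = tri d := by linarith [two_mul_tri (-d - 1), two_mul_tri d]
  exact_mod_cast h

theorem le_tri (k : ℕ) : k ≤ tri k := by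
  have h : (k : ℤ) ≤ tri k := by nlinarith [two_mul_tri k]
  exact_mod_cast h

end TriangularNumbers

section TripleProduct

variable (R) in
def tripleProduct (a b : ℕ) : Polynomial R⟦X⟧ :=
  (∏ j ∈ range a, (Polynomial.C (X ^ (j + 1)) - Polynomial.X)) *
    ∏ j ∈ range b, (1 - Polynomial.C (X ^ j) * Polynomial.X)

theorem coeff_tripleProduct_zero (b i : ℕ) :
    (tripleProduct R 0 b).coeff i = (-1) ^ i * X ^ tri (i - 1) * qBinomial R b i := by
  induction b generalizing i with
  | zero => cases i <;> simp [tripleProduct, tri, qBinomial_eq_zero_of_lt, Polynomial.coeff_one]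
  | succ b ih =>
    have h : tripleProduct R 0 (b + 1) =
        tripleProduct R 0 b * (1 - Polynomial.C (X ^ b) * Polynomial.X) := by
      simp [tripleProduct, prod_range_succ]
    rw [h]
    cases i with
    | zero => simp [ih]
    | succ i =>
      rw [coeff_mul_one_sub_C_mul_X_succ, ih, ih, qBinomial_succ_succ']
      push_cast
      rw [add_sub_cancel_right]
      rcases le_or_gt i b with hib | hib
      · have e : (X : R⟦X⟧) ^ b * X ^ tri (i - 1) = X ^ tri i * X ^ (b - i) := by
          rw [← pow_add, ← pow_add]
          congr 1
          zify [hib]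
          linarith [two_mul_tri i, two_mul_tri (i - 1)]
        linear_combination (-(-1) ^ i * qBinomial R b i) * e
      · simp [qBinomial_eq_zero_of_lt hib]

theorem coeff_tripleProduct (a b i : ℕ) :
    (tripleProduct R a b).coeff i = (-1) ^ i * X ^ tri (i - a - 1) * qBinomial R (a + b) i := by
  induction a generalizing i with
  | zero => simpa using coeff_tripleProduct_zero b i
  | succ a ih =>
    have h : tripleProduct R (a + 1) b =
        tripleProduct R a b * (Polynomial.C (X ^ (a + 1)) - Polynomial.X) := by
      simp only [tripleProduct, prod_range_succ]
      ring
    rw [h, show a + 1 + b = a + b + 1 by omega]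
    cases i with
    | zero =>
      rw [coeff_mul_C_sub_X_zero, ih]
      simp only [pow_zero, one_mul, qBinomial_zero_right, mul_one, ← pow_add]
      congr 1
      zify
      linarith [two_mul_tri (0 - a - 1), two_mul_tri (0 - (a + 1) - 1)]
    | succ i =>
      rw [coeff_mul_C_sub_X_succ, ih, ih, qBinomial_succ_succ]
      push_cast
      have e : (X : R⟦X⟧) ^ tri (i + 1 - a - 1) * X ^ (a + 1) =
          X ^ tri (i + 1 - (a + 1) - 1) * X ^ (i + 1) := by
        rw [← pow_add, ← pow_add]
        congr 1
        zify
        linarith [two_mul_tri (i + 1 - a - 1), two_mul_tri (i + 1 - (a + 1) - 1)]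
      rw [show (i : ℤ) - a - 1 = i + 1 - (a + 1) - 1 by ring]
      linear_combination (-1) ^ (i + 1) * qBinomial R (a + b) (i + 1) * e

theorem eval_one_derivative_tripleProduct (s : ℕ) :
    (tripleProduct R s (s + 1)).derivative.eval 1 = -((-1) ^ s * qPochhammer R s ^ 2) := by
  rw [tripleProduct, prod_range_succ']
  simp only [pow_zero, map_one, one_mul, Polynomial.derivative_mul, Polynomial.derivative_sub,
    Polynomial.derivative_one, Polynomial.derivative_X, Polynomial.eval_add, Polynomial.eval_mul,
    Polynomial.eval_sub, Polynomial.eval_one, Polynomial.eval_X, Polynomial.eval_prod,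
    Polynomial.eval_C]
  have hneg : ∏ j ∈ range s, (X ^ (j + 1) - 1 : R⟦X⟧) = (-1) ^ s * qPochhammer R s := by
    have h := prod_neg (s := range s) fun j => (1 - X ^ (j + 1) : R⟦X⟧)
    rw [card_range] at h
    rw [qPochhammer, ← h]
    exact prod_congr rfl fun j _ => (neg_sub _ _).symm
  simp only [mul_one, sub_self, mul_zero, zero_add, Polynomial.eval_zero, zero_sub, hneg]
  rw [qPochhammer]
  ring

theorem eval_one_derivative_tripleProduct_eq_sum (a b : ℕ) :
    (tripleProduct R a b).derivative.eval 1 =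
      ∑ i ∈ range (a + b + 1), (tripleProduct R a b).coeff i * i := by
  rw [Polynomial.derivative_eval, Polynomial.sum_over_range' _ (by simp) (a + b + 1)]
  · simp
  · refine Nat.lt_succ_of_le (Polynomial.natDegree_le_iff_coeff_eq_zero.2 fun N hN => ?_)
    rw [coeff_tripleProduct, qBinomial_eq_zero_of_lt (by exact_mod_cast hN), mul_zero]

/-- The terms `i = s - k` and `i = s + 1 + k` of the derivative of `tripleProduct R s (s + 1)`
at `1` carry opposite signs, the same power of `X` and, by symmetry, the same Gaussian binomial, so
their weights `i` combine to `2k + 1`. -/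
theorem qPochhammer_sq_eq_sum (s : ℕ) :
    qPochhammer R s ^ 2 = ∑ p ∈ antidiagonal s,
      C ((-1) ^ p.1 * (2 * p.1 + 1 : R)) * X ^ tri p.1 * qBinomial R (2 * s + 1) p.2 := by
  set f : ℕ → R⟦X⟧ := fun i => (tripleProduct R s (s + 1)).coeff i * i with hf
  have h := eval_one_derivative_tripleProduct (R := R) s
  rw [eval_one_derivative_tripleProduct_eq_sum, show s + (s + 1) + 1 = s + 1 + (s + 1) by ring,
    sum_range_add, ← Nat.sum_antidiagonal_eq_sum_range_succ (fun k _ => f (s + 1 + k)),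
    ← Nat.sum_antidiagonal_eq_sum_range_succ (fun k _ => f k), ← Nat.sum_antidiagonal_swap] at h
  simp only [Prod.fst_swap, ← sum_add_distrib] at h
  have hterm : ∀ p ∈ antidiagonal s, C ((-1) ^ p.1 * (2 * p.1 + 1 : R)) * X ^ tri p.1 *
      qBinomial R (2 * s + 1) p.2 = -((-1) ^ s * (f p.2 + f (s + 1 + p.1))) := by
    rintro ⟨k, m⟩ hkm
    rw [HasAntidiagonal.mem_antidiagonal] at hkm
    subst hkm
    have e1 : tri ((m : ℤ) - (k + m : ℕ) - 1) = tri k := by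
      rw [← tri_neg_sub_one]
      push_cast
      ring_nf
    have e2 : tri ((k + m + 1 + k : ℕ) - (k + m : ℕ) - 1 : ℤ) = tri k := by
      push_cast
      ring_nf
    have e3 : qBinomial R (2 * (k + m) + 1) (k + m + 1 + k) =
        qBinomial R (2 * (k + m) + 1) m := by
      rw [show 2 * (k + m) + 1 = m + (k + m + 1 + k) by ring, ← qBinomial_add_comm]
    have s1 : (-1 : R⟦X⟧) ^ (k + m + 1 + k) = -(-1) ^ m := by
      rw [show k + m + 1 + k = 2 * k + m + 1 by ring, pow_add, pow_add, pow_mul]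
      simp
    have s2 : (-1 : R⟦X⟧) ^ (k + m) * (-1) ^ m = (-1) ^ k := by
      rw [pow_add, mul_assoc, ← pow_add, ← two_mul, pow_mul]
      simp
    simp only [hf, coeff_tripleProduct, e1, e2, s1,
      show k + m + (k + m + 1) = 2 * (k + m) + 1 by ring, e3, map_mul, map_pow, map_neg, map_one,
      map_add, map_natCast, map_ofNat]
    push_cast
    linear_combination (-(2 * k + 1) * X ^ tri k * qBinomial R (2 * (k + m) + 1) m) * s2
  rw [sum_congr rfl hterm, sum_neg_distrib, ← mul_sum, h]
  ring_nf
  rw [mul_comm s 2, pow_mul, neg_one_sq, one_pow, mul_one]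

end TripleProduct

section Jacobi

variable (R) in
def jacobiSeries : R⟦X⟧ :=
  PowerSeries.mk fun n => ∑ k ∈ range (n + 1), if n = tri k then (-1) ^ k * (2 * k + 1 : R) else 0

theorem jacobiSeries_smodEq_sum (N : ℕ) :
    jacobiSeries R ≡ ∑ k ∈ range (N + 1), C ((-1) ^ k * (2 * k + 1 : R)) * X ^ tri k
      [SMOD Ideal.span {(X : R⟦X⟧) ^ (N + 1)}] := by
  refine smodEq_span_X_pow_iff.2 fun n hn => ?_
  simp only [jacobiSeries, coeff_mk, map_sum, coeff_C_mul_X_pow]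
  refine sum_subset (range_subset_range.2 (by omega)) fun k _ hk => if_neg ?_
  have := le_tri k
  simp only [mem_range] at hk
  omega

theorem pentagonalSeries_sq : pentagonalSeries R ^ 2 = jacobiSeries R * partitionSeries R := by
  ext N
  refine coeff_eq_of_smodEq (n := N + 1) ?_ N.lt_succ_self
  have hterm : ∀ p ∈ antidiagonal N,
      C ((-1) ^ p.1 * (2 * p.1 + 1 : R)) * X ^ tri p.1 * qBinomial R (2 * N + 1) p.2 ≡
        C ((-1) ^ p.1 * (2 * p.1 + 1 : R)) * X ^ tri p.1 * partitionSeries R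
        [SMOD Ideal.span {(X : R⟦X⟧) ^ (N + 1)}] := by
    rintro ⟨k, m⟩ hkm
    rw [HasAntidiagonal.mem_antidiagonal] at hkm
    have hq := qBinomial_smodEq_partitionSeries (R := R) (a := m) (b := 2 * k + m + 1) le_rfl
      (by omega)
    rw [show m + (2 * k + m + 1) = 2 * N + 1 by omega] at hq
    simp only [mul_assoc]
    exact SModEq.rfl.mul (smodEq_span_X_pow_mono (by have := le_tri k; omega) (X_pow_mul_smodEq hq))
  calc pentagonalSeries R ^ 2
      ≡ qPochhammer R N ^ 2 [SMOD Ideal.span {(X : R⟦X⟧) ^ (N + 1)}] :=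
        (pentagonalSeries_smodEq_qPochhammer (R := R) N).pow 2
    _ = ∑ p ∈ antidiagonal N,
          C ((-1) ^ p.1 * (2 * p.1 + 1 : R)) * X ^ tri p.1 * qBinomial R (2 * N + 1) p.2 :=
        qPochhammer_sq_eq_sum N
    _ ≡ ∑ p ∈ antidiagonal N, C ((-1) ^ p.1 * (2 * p.1 + 1 : R)) * X ^ tri p.1 * partitionSeries R
        [SMOD Ideal.span {(X : R⟦X⟧) ^ (N + 1)}] := SModEq.sum hterm
    _ = (∑ k ∈ range (N + 1), C ((-1) ^ k * (2 * k + 1 : R)) * X ^ tri k) * partitionSeries R := by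
        rw [Nat.sum_antidiagonal_eq_sum_range_succ (fun k _ =>
          C ((-1) ^ k * (2 * k + 1 : R)) * X ^ tri k * partitionSeries R), sum_mul]
    _ ≡ jacobiSeries R * partitionSeries R [SMOD Ideal.span {(X : R⟦X⟧) ^ (N + 1)}] :=
        (jacobiSeries_smodEq_sum (R := R) N).symm.mul SModEq.rfl

theorem pentagonalSeries_pow_three : pentagonalSeries R ^ 3 = jacobiSeries R := by
  rw [pow_succ, pentagonalSeries_sq, mul_assoc, partitionSeries_mul_pentagonalSeries, mul_one]

end Jacobi

section ModSeven

theorem coeff_pow_expChar_eq_zero (p : ℕ) [ExpChar R p] (f : R⟦X⟧) {n : ℕ} (hn : ¬p ∣ n) :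
    coeff n (f ^ p) = 0 := by
  have hp := expChar_ne_zero R p
  have h : map (frobenius R p) (expand p hp f) = f ^ p :=
    MvPowerSeries.map_frobenius_expand p hp
  rw [← h, coeff_map, coeff_expand_of_not_dvd p hp f hn, map_zero]

theorem coeff_jacobiSeries_mul_coeff_jacobiSeries {u v : ℕ} (h : (u + v) % 7 = 5) :
    coeff u (jacobiSeries (ZMod 7)) * coeff v (jacobiSeries (ZMod 7)) = 0 := by
  simp only [jacobiSeries, coeff_mk, sum_mul_sum]
  refine sum_eq_zero fun j _ => sum_eq_zero fun k _ => ?_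
  by_cases hu : u = tri j
  swap
  · rw [if_neg hu, zero_mul]
  by_cases hv : v = tri k
  swap
  · rw [if_neg hv, mul_zero]
  rw [if_pos hu, if_pos hv]
  obtain ⟨q, hq⟩ : ∃ q, tri j + tri k = 7 * q + 5 := ⟨(u + v) / 7, by omega⟩
  have hz : (2 * j + 1 : ℤ) ^ 2 + (2 * k + 1) ^ 2 = 7 * (8 * q + 6) := by
    have hq' : (tri j + tri k : ℤ) = 7 * q + 5 := by exact_mod_cast hq
    linear_combination (-4) * two_mul_tri j + (-4) * two_mul_tri k + 8 * hq'
  have hz7 := congrArg (Int.cast : ℤ → ZMod 7) hz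
  push_cast at hz7
  have hsq : ∀ x y z : ZMod 7, x ^ 2 + y ^ 2 = 7 * z → x = 0 := by decide
  rw [hsq _ _ _ hz7]
  simp

theorem coeff_jacobiSeries_sq_eq_zero {n : ℕ} (h : n % 7 = 5) :
    coeff n (jacobiSeries (ZMod 7) ^ 2) = 0 := by
  rw [sq, coeff_mul]
  exact sum_eq_zero fun p hp =>
    coeff_jacobiSeries_mul_coeff_jacobiSeries (by rwa [HasAntidiagonal.mem_antidiagonal.1 hp])

end ModSeven

end

end RamanujanCongruence

open PowerSeries RamanujanCongruence

theorem stmt_7 (n : ℕ) :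
    Fintype.card (Nat.Partition (7 * n + 5)) % 7 = 0 := by
  have : Fact (Nat.Prime 7) := ⟨by norm_num⟩
  have hP : partitionSeries (ZMod 7) =
      jacobiSeries (ZMod 7) ^ 2 * partitionSeries (ZMod 7) ^ 7 := by
    rw [← pentagonalSeries_pow_three]
    calc partitionSeries (ZMod 7)
        = partitionSeries (ZMod 7) *
            (partitionSeries (ZMod 7) * pentagonalSeries (ZMod 7)) ^ 6 := by
          rw [partitionSeries_mul_pentagonalSeries, one_pow, mul_one]
      _ = _ := by ring
  have hcoeff : coeff (7 * n + 5) (partitionSeries (ZMod 7)) = 0 := by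
    rw [hP, coeff_mul]
    refine sum_eq_zero fun ⟨u, v⟩ huv => ?_
    rw [Finset.HasAntidiagonal.mem_antidiagonal] at huv
    by_cases h7 : 7 ∣ v
    · rw [coeff_jacobiSeries_sq_eq_zero (by omega), zero_mul]
    · rw [coeff_pow_expChar_eq_zero 7 _ h7, mul_zero]
  rw [partitionSeries, coeff_mk, ZMod.natCast_eq_zero_iff] at hcoeff
  exact Nat.mod_eq_zero_of_dvd hcoeff
end

section
/- For every positive integer n, p(n) = Σ_{j ≥ 1} (−1)^{j−1} [ p(n − j(3j−1)/2) + p(n − j(3j+1)/2) ], where terms with negative argument are interpreted as 0. -/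
/-- The partition function extended to the integers: `pz m` is the number of
partitions of `m` when `m ≥ 0`, and `0` when `m < 0`. -/
def pz (m : ℤ) : ℤ :=
  if 0 ≤ m then (Fintype.card (Nat.Partition m.toNat) : ℤ) else 0

/-!
The generating function `∑ p(n) Xⁿ = ∏ᵢ (1 - Xⁱ)⁻¹` and Euler's pentagonal number theorem
`∏ᵢ (1 - Xⁱ) = ∑ₖ (-1)ᵏ X^(k(3k-1)/2)` (both in Mathlib) show that the product of the partition
series with the pentagonal series is `1`. Reading off the coefficient of `Xⁿ` for `n ≥ 1` gives
`∑ₖ (-1)ᵏ p(n - k(3k-1)/2) = 0` over `k ∈ ℤ`; pairing `k` with `-k` and isolating `k = 0` yields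
the recurrence.
-/

open PowerSeries PowerSeries.WithPiTopology

noncomputable def partitionSeries (R : Type*) [CommSemiring R] : R⟦X⟧ :=
  PowerSeries.mk fun n ↦ (Fintype.card n.Partition : R)

theorem partitionSeries_mul_pentagonalSeries (R : Type*) [CommRing R] :
    partitionSeries R * pentagonalSeries R = 1 := by
  let _ : TopologicalSpace R := ⊥
  have : DiscreteTopology R := ⟨rfl⟩
  have hP : HasProd (fun i ↦ ∑' j : ℕ, (X ^ (i + 1) : R⟦X⟧) ^ j) (partitionSeries R) := by
    simpa [pow_mul, Nat.Partition.restricted, partitionSeries] using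
      Nat.Partition.hasProd_powerSeriesMk_card_restricted R (fun _ ↦ True)
  have geom (i : ℕ) : (∑' j : ℕ, (X ^ (i + 1) : R⟦X⟧) ^ j) * (1 - X ^ (i + 1)) = 1 :=
    tsum_pow_mul_one_sub_of_constantCoeff_eq_zero (by simp)
  have h := hP.mul (hasProd_one_sub_X_pow R)
  simp only [geom] at h
  exact h.unique hasProd_one

theorem coeff_X_pow_mul_partitionSeries (a n : ℕ) :
    coeff n (X ^ a * partitionSeries ℤ) = pz (n - a) := by
  rw [coeff_X_pow_mul', pz]
  split_ifs <;> first | omega | simp [partitionSeries]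

theorem hasSum_negOnePow_mul_pz_sub_pentagonal {n : ℕ} (hn : n ≠ 0) :
    HasSum (fun k : ℤ ↦ (k.negOnePow : ℤ) * pz (n - pentagonal k)) 0 := by
  have h := (hasSum_pentagonalSeries ℤ).mul_right (partitionSeries ℤ)
  rw [mul_comm, partitionSeries_mul_pentagonalSeries] at h
  have hcoeff (k : ℤ) : coeff n ((k.negOnePow : ℤ⟦X⟧) * X ^ pentagonal k * partitionSeries ℤ) =
      k.negOnePow * pz (n - pentagonal k) := by
    rw [← map_intCast (C (R := ℤ)), mul_assoc, coeff_C_mul, coeff_X_pow_mul_partitionSeries,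
      Int.cast_id]
  simpa only [hcoeff, coeff_one, if_neg hn] using (hasSum_iff_hasSum_coeff ℤ).1 h n

theorem pentagonal_natCast (j : ℕ) : pentagonal j = j * (3 * j - 1) / 2 := by
  rcases Nat.eq_zero_or_pos j with rfl | hj
  · rfl
  · zify [show 1 ≤ 3 * j by omega]
    exact natCast_pentagonal j

theorem pentagonal_neg_natCast (j : ℕ) : pentagonal (-j) = j * (3 * j + 1) / 2 := by
  zify
  rw [← two_mul_natCast_pentagonal_neg]
  omega

theorem natAbs_le_pentagonal (k : ℤ) : k.natAbs ≤ pentagonal k := by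
  have h := two_mul_natCast_pentagonal k
  zify
  rcases abs_cases k with ⟨hk, _⟩ | ⟨hk, _⟩ <;> rw [hk] <;> nlinarith

theorem pz_sub_pentagonal_eq_zero {n : ℕ} {k : ℤ} (hk : n < k.natAbs) :
    pz (n - pentagonal k) = 0 :=
  if_neg (by have := natAbs_le_pentagonal k; omega)

theorem negOnePow_mul_pz_add_neg {n j : ℕ} (hj : 1 ≤ j) :
    ((j : ℤ).negOnePow : ℤ) * pz (n - pentagonal j) +
        ((-j : ℤ).negOnePow : ℤ) * pz (n - pentagonal (-j)) =
      -((-1) ^ (j - 1) * (pz (n - ((j * (3 * j - 1) / 2 : ℕ) : ℤ)) +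
        pz (n - ((j * (3 * j + 1) / 2 : ℕ) : ℤ)))) := by
  obtain ⟨i, rfl⟩ : ∃ i, j = i + 1 := ⟨j - 1, by omega⟩
  rw [Int.negOnePow_neg, pentagonal_natCast, pentagonal_neg_natCast, Int.coe_negOnePow_natCast,
    pow_succ, Nat.add_sub_cancel]
  ring

theorem stmt_9 (n : ℕ) (hn : 1 ≤ n) :
    pz n = ∑ j ∈ Finset.Icc 1 n,
      (-1 : ℤ) ^ (j - 1) *
        (pz ((n : ℤ) - ((j * (3 * j - 1) / 2 : ℕ) : ℤ)) +
         pz ((n : ℤ) - ((j * (3 * j + 1) / 2 : ℕ) : ℤ))) := by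
  set F : ℤ → ℤ := fun k ↦ (k.negOnePow : ℤ) * pz (n - pentagonal k)
  have hF0 : F 0 = pz n := by simp [F, pentagonal_def]
  have hF : HasSum (fun j : ℕ ↦ F j + F (-j)) (F 0) := by
    simpa only [zero_add] using (hasSum_negOnePow_mul_pz_sub_pentagonal (by omega)).nat_add_neg
  have hvanish (j : ℕ) (hj : j ∉ insert 0 (Finset.Icc 1 n)) : F j + F (-j) = 0 := by
    have hnj : n < j := by
      simp only [Finset.mem_insert, Finset.mem_Icc, not_or, not_and, not_le] at hj
      omega
    simp only [F, pz_sub_pentagonal_eq_zero (k := j) (by simpa using hnj),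
      pz_sub_pentagonal_eq_zero (k := -j) (by simpa using hnj), mul_zero, add_zero]
  have hsum := hF.unique (hasSum_sum_of_ne_finset_zero hvanish)
  rw [Finset.sum_insert (by simp), Finset.sum_congr rfl fun j hj ↦
    negOnePow_mul_pz_add_neg (Finset.mem_Icc.1 hj).1, Finset.sum_neg_distrib] at hsum
  simp only [Nat.cast_zero, neg_zero, hF0] at hsum
  linarith
end
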